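/- Let F be a u×m real matrix and X an R^m-valued random vector with F X = 0 a.s. and finite second moments. Suppose X' satisfies A_l X' ~ A_l X for l = 1,...,L. If (1) there exist a positive definite C and matrices Σ_l with F^T C F = Σ_l A_l^T Σ_l A_l, and (2) there exists l* such that the stacked matrix [F; A_{l*}] has full column rank m, then X' ~ X (equality of distributions of the full vectors). -/

import Mathlib

/-!
The identity `Fᵀ C F = ∑ₗ Aₗᵀ Σₗ Aₗ` writes the quadratic form `(F x)ᵀ C (F x)` as a sum of
quadratic forms in the `Aₗ x`, whose expectations depend only on the laws of the `Aₗ X`. Hence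
`𝔼[(F X')ᵀ C (F X')] = 𝔼[(F X)ᵀ C (F X)] = 0`, and positive definiteness of `C` forces `F X' = 0`
almost surely. Full column rank of `[F; A_{l*}]` gives `G₁ F + G₂ A_{l*} = 1`, so on `ker F` the
vector is recovered as `G₂ A_{l*} x`, and `X' = G₂ A_{l*} X' ~ G₂ A_{l*} X = X`.
-/

open MeasureTheory ProbabilityTheory Matrix

namespace Matrix

variable {ι κ n : Type*} [Fintype n]

lemma dotProduct_transpose_mul_mul_mulVec [Fintype κ] {R : Type*} [CommSemiring R]
    (B : Matrix κ n R) (N : Matrix κ κ R) (v : n → R) :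
    v ⬝ᵥ (Bᵀ * N * B) *ᵥ v = B *ᵥ v ⬝ᵥ N *ᵥ (B *ᵥ v) := by
  rw [← mulVec_mulVec, ← mulVec_mulVec, dotProduct_mulVec, vecMul_transpose]

lemma dotProduct_mulVec_eq_sum_of_transpose_mul_mul_eq [Fintype ι] {R : Type*} [CommSemiring R]
    {L : Type*} [Fintype L] {κ : L → Type*} [∀ l, Fintype (κ l)] {F : Matrix ι n R}
    {C : Matrix ι ι R} {A : ∀ l, Matrix (κ l) n R} {Sig : ∀ l, Matrix (κ l) (κ l) R}
    (heq : Fᵀ * C * F = ∑ l, (A l)ᵀ * Sig l * A l) (v : n → R) :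
    F *ᵥ v ⬝ᵥ C *ᵥ (F *ᵥ v) = ∑ l, A l *ᵥ v ⬝ᵥ Sig l *ᵥ (A l *ᵥ v) := by
  simp only [← dotProduct_transpose_mul_mul_mulVec, heq, sum_mulVec, dotProduct_sum]

variable {K : Type*} [Field K]

lemma ker_mulVecLin_eq_bot_of_rank_eq_card {M : Matrix ι n K} (hrank : M.rank = Fintype.card n) :
    LinearMap.ker M.mulVecLin = ⊥ := by
  have hrn := M.mulVecLin.finrank_range_add_finrank_ker
  rw [show Module.finrank K (LinearMap.range M.mulVecLin) = M.rank from rfl, hrank,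
    Module.finrank_fintype_fun_eq_card] at hrn
  exact Submodule.finrank_eq_zero.mp (by omega)

lemma exists_mul_add_mul_eq_one_of_rank_fromRows [Fintype ι] [Fintype κ] [DecidableEq n]
    {F : Matrix ι n K} {A : Matrix κ n K} (hrank : (fromRows F A).rank = Fintype.card n) :
    ∃ (G₁ : Matrix n ι K) (G₂ : Matrix n κ K), G₁ * F + G₂ * A = 1 := by
  classical
  obtain ⟨g, hg⟩ := (fromRows F A).mulVecLin.exists_leftInverse_of_injective
    (ker_mulVecLin_eq_bot_of_rank_eq_card hrank)
  refine ⟨(LinearMap.toMatrix' g).toCols₁, (LinearMap.toMatrix' g).toCols₂, ?_⟩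
  rw [← fromCols_mul_fromRows, fromCols_toCols, ← LinearMap.toMatrix'_toLin' (fromRows F A),
    ← LinearMap.toMatrix'_comp, toLin'_apply', hg, LinearMap.toMatrix'_id]

end Matrix

section Probability

variable {Ω Ω' β γ : Type*} [MeasurableSpace Ω] [MeasurableSpace Ω'] {μ : Measure Ω}
  {ν : Measure Ω'} {n : Type*} [Fintype n]

lemma integrable_dotProduct_mulVec_self {X : Ω → n → ℝ} (hX : ∀ i, MemLp (fun ω => X ω i) 2 μ)
    (N : Matrix n n ℝ) : Integrable (fun ω => X ω ⬝ᵥ N *ᵥ X ω) μ := by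
  simp only [dotProduct, mulVec]
  exact integrable_finsetSum _ fun i _ => (hX i).integrable_mul (q := 2)
    (memLp_finsetSum _ fun j _ => (hX j).const_mul (N i j))

lemma ae_eq_zero_of_integral_dotProduct_mulVec_self_eq_zero {C : Matrix n n ℝ} (hC : C.PosDef)
    {Y : Ω → n → ℝ} (hint : Integrable (fun ω => Y ω ⬝ᵥ C *ᵥ Y ω) μ)
    (h0 : ∫ ω, Y ω ⬝ᵥ C *ᵥ Y ω ∂μ = 0) : ∀ᵐ ω ∂μ, Y ω = 0 := by
  have hnonneg : 0 ≤ fun ω => Y ω ⬝ᵥ C *ᵥ Y ω := fun ω => by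
    simpa using hC.posSemidef.dotProduct_mulVec_nonneg (Y ω)
  filter_upwards [(integral_eq_zero_iff_of_nonneg hnonneg hint).mp h0] with ω hω
  by_contra hne
  simpa [hω] using hC.dotProduct_mulVec_pos hne

lemma ProbabilityTheory.IdentDistrib.of_ae_eq_comp [MeasurableSpace β] [MeasurableSpace γ]
    {f : Ω' → β} {g : Ω → β} (h : IdentDistrib f g ν μ) {φ : β → γ} (hφ : Measurable φ)
    {X' : Ω' → γ} {X : Ω → γ}
    (hX' : X' =ᵐ[ν] φ ∘ f) (hX : X =ᵐ[μ] φ ∘ g) : IdentDistrib X' X ν μ :=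
  ((IdentDistrib.of_ae_eq (hφ.comp_aemeasurable h.aemeasurable_fst) hX'.symm).symm.trans
    (h.comp hφ)).trans (IdentDistrib.of_ae_eq (hφ.comp_aemeasurable h.aemeasurable_snd) hX.symm)

lemma ae_mulVec_eq_zero_of_identDistrib_mulVec {ι L : Type*} [Fintype ι] [Fintype L]
    {κ : L → Type*} [∀ l, Fintype (κ l)] {F : Matrix ι n ℝ} {C : Matrix ι ι ℝ} (hC : C.PosDef)
    {A : ∀ l, Matrix (κ l) n ℝ} {Sig : ∀ l, Matrix (κ l) (κ l) ℝ}
    (heq : Fᵀ * C * F = ∑ l, (A l)ᵀ * Sig l * A l) {X : Ω → n → ℝ} {X' : Ω' → n → ℝ}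
    (hX2 : ∀ i, MemLp (fun ω => X ω i) 2 μ) (hX0 : ∀ᵐ ω ∂μ, F *ᵥ X ω = 0)
    (hA : ∀ l, IdentDistrib (fun ω => A l *ᵥ X' ω) (fun ω => A l *ᵥ X ω) ν μ) :
    ∀ᵐ ω ∂ν, F *ᵥ X' ω = 0 := by
  have hquad := dotProduct_mulVec_eq_sum_of_transpose_mul_mul_eq heq
  set q : ∀ l, (κ l → ℝ) → ℝ := fun l w => w ⬝ᵥ Sig l *ᵥ w
  have hid : ∀ l, IdentDistrib (fun ω => q l (A l *ᵥ X' ω)) (fun ω => q l (A l *ᵥ X ω)) ν μ :=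
    fun l => (hA l).comp (u := q l) (by fun_prop)
  have hintμ : ∀ l, Integrable (fun ω => q l (A l *ᵥ X ω)) μ := fun l => by
    simpa only [q, dotProduct_transpose_mul_mul_mulVec] using
      integrable_dotProduct_mulVec_self hX2 ((A l)ᵀ * Sig l * A l)
  have hintν : ∀ l, Integrable (fun ω => q l (A l *ᵥ X' ω)) ν :=
    fun l => (hid l).integrable_iff.mpr (hintμ l)
  refine ae_eq_zero_of_integral_dotProduct_mulVec_self_eq_zero hC ?_ ?_
  · simp only [hquad]
    exact integrable_finsetSum _ fun l _ => hintν l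
  calc ∫ ω, F *ᵥ X' ω ⬝ᵥ C *ᵥ (F *ᵥ X' ω) ∂ν
      = ∑ l, ∫ ω, q l (A l *ᵥ X' ω) ∂ν := by
        simp only [hquad]
        exact integral_finsetSum _ fun l _ => hintν l
    _ = ∑ l, ∫ ω, q l (A l *ᵥ X ω) ∂μ := Finset.sum_congr rfl fun l _ => (hid l).integral_eq
    _ = ∫ ω, F *ᵥ X ω ⬝ᵥ C *ᵥ (F *ᵥ X ω) ∂μ := by
        simp only [hquad]
        exact (integral_finsetSum _ fun l _ => hintμ l).symm
    _ = 0 := integral_eq_zero_of_ae (by filter_upwards [hX0] with ω h; simp [h])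

end Probability

theorem stmt3_general {Ω Ω' : Type*} [MeasurableSpace Ω] [MeasurableSpace Ω']
    (μ : Measure Ω) (ν : Measure Ω')
    (u m L : ℕ) (F : Matrix (Fin u) (Fin m) ℝ)
    (ul : Fin L → ℕ) (A : (l : Fin L) → Matrix (Fin (ul l)) (Fin m) ℝ)
    (Sig : (l : Fin L) → Matrix (Fin (ul l)) (Fin (ul l)) ℝ)
    (C : Matrix (Fin u) (Fin u) ℝ) (hC : C.PosDef)
    (heq : Fᵀ * C * F = ∑ l, (A l)ᵀ * Sig l * A l)
    (lstar : Fin L) (hrank : (Matrix.fromRows F (A lstar)).rank = m)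
    (X : Ω → Fin m → ℝ) (X' : Ω' → Fin m → ℝ)
    (hX2 : ∀ i, MemLp (fun ω => X ω i) 2 μ)
    (hX0 : ∀ᵐ ω ∂μ, F.mulVec (X ω) = 0)
    (hA : ∀ l, IdentDistrib (fun ω => (A l).mulVec (X' ω)) (fun ω => (A l).mulVec (X ω)) ν μ) :
    IdentDistrib X' X ν μ := by
  have hFX' := ae_mulVec_eq_zero_of_identDistrib_mulVec hC heq hX2 hX0 hA
  obtain ⟨G₁, G₂, hG⟩ :=
    exists_mul_add_mul_eq_one_of_rank_fromRows (hrank.trans (Fintype.card_fin m).symm)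
  have hrecover : ∀ v, F *ᵥ v = 0 → G₂ *ᵥ (A lstar *ᵥ v) = v := fun v hv => by
    simpa [hv, add_mulVec, ← mulVec_mulVec] using congrArg (· *ᵥ v) hG
  exact (hA lstar).of_ae_eq_comp (φ := (G₂ *ᵥ ·)) (by fun_prop)
    (hFX'.mono fun ω h => (hrecover _ h).symm) (hX0.mono fun ω h => (hrecover _ h).symm)

/-- Fundamental Property of Polytope Codes (Theorem 3): if `F X = 0` a.s.,
`Aₗ X' ~ Aₗ X` for each `l`, `Fᵀ C F = ∑ₗ Aₗᵀ Σₗ Aₗ` for a positive definite `C`,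
and the stacked matrix `[F; A_{l*}]` has full column rank for some `l*`,
then `X' ~ X`. -/
theorem stmt3 {Ω Ω' : Type*} [MeasurableSpace Ω] [MeasurableSpace Ω']
    (μ : Measure Ω) (ν : Measure Ω') [IsProbabilityMeasure μ] [IsProbabilityMeasure ν]
    (u m L : ℕ) (F : Matrix (Fin u) (Fin m) ℝ)
    (ul : Fin L → ℕ) (A : (l : Fin L) → Matrix (Fin (ul l)) (Fin m) ℝ)
    (Sig : (l : Fin L) → Matrix (Fin (ul l)) (Fin (ul l)) ℝ)
    (hSig : ∀ l, (Sig l).IsSymm)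
    (C : Matrix (Fin u) (Fin u) ℝ) (hC : C.PosDef)
    (heq : Fᵀ * C * F = ∑ l, (A l)ᵀ * Sig l * A l)
    (lstar : Fin L) (hrank : (Matrix.fromRows F (A lstar)).rank = m)
    (X : Ω → Fin m → ℝ) (X' : Ω' → Fin m → ℝ)
    (hXmeas : Measurable X)
    (hX2 : ∀ i, MemLp (fun ω => X ω i) 2 μ)
    (hX0 : ∀ᵐ ω ∂μ, F.mulVec (X ω) = 0)
    (hA : ∀ l, IdentDistrib (fun ω => (A l).mulVec (X' ω)) (fun ω => (A l).mulVec (X ω)) ν μ) :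
    IdentDistrib X' X ν μ :=
  stmt3_general μ ν u m L F ul A Sig C hC heq lstar hrank X X' hX2 hX0 hA
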